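/- Let Y = {Yⁿ} be the mixed source of two i.i.d. sources Y₁, Y₂ on a countable alphabet 𝒴 with weights w(1), w(2). Let {z_n} be any sequence of real numbers and let {γ_n} be a sequence with γ₁ > γ₂ > ⋯ > 0, γ_n → 0, and √n·γ_n → ∞. Then for i = 1, 2 and every n ≥ 1, Pr{ (1/√n) log(1/P_{Yⁿ}(Yᵢⁿ)) ≥ z_n } ≥ Pr{ (1/√n) log(1/P_{Yᵢⁿ}(Yᵢⁿ)) ≥ z_n + γ_n } − e^{−√n·γ_n}, where Yᵢⁿ is distributed according to the n-fold i.i.d. extension P_{Yᵢⁿ} of Yᵢ. -/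

import Mathlib

/-! Let `Pⁿ` be the mixture, `A = {zₙ + γₙ ≤ log (1/Pᵢⁿ) / √n}` and `B = {zₙ ≤ log (1/Pⁿ) / √n}`.
On `A \ B` the two thresholds give `Pᵢⁿ(y) ≤ e^{-√n γₙ} Pⁿ(y)`, hence
`Pᵢⁿ(A) ≤ Pᵢⁿ(B) + e^{-√n γₙ} Pⁿ(A \ B) ≤ Pᵢⁿ(B) + e^{-√n γₙ}`. Positive weights make `Pⁿ(y) > 0`
wherever `Pᵢⁿ(y) > 0`, so `log Pⁿ` is not the junk value `log 0 = 0` there. -/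

open Filter MeasureTheory
open scoped BigOperators

noncomputable section

def prb {α : Type*} (P : α → ℝ) (s : Set α) : ℝ := ∑' a, s.indicator P a

def varDist {α : Type*} (P Q : α → ℝ) : ℝ := ∑' a, |P a - Q a|

def IsPMF {α : Type*} (P : α → ℝ) : Prop := (∀ a, 0 ≤ P a) ∧ HasSum P 1

def pushMap {α β : Type*} (P : α → ℝ) (φ : α → β) : β → ℝ :=
  fun b => ∑' a, Set.indicator {a | φ a = b} P a

def unif (M : ℕ) : Fin M → ℝ := fun _ => 1 / (M : ℝ)

def prodP {α : Type*} (P : α → ℝ) (n : ℕ) : (Fin n → α) → ℝ := fun y => ∏ j, P (y j)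

def mix2 {α : Type*} (P1 P2 : α → ℝ) (w1 w2 : ℝ) (n : ℕ) : (Fin n → α) → ℝ :=
  fun y => w1 * prodP P1 n y + w2 * prodP P2 n y

section

variable {α : Type*}

lemma IsPMF.summable {P : α → ℝ} (hP : IsPMF P) : Summable P := hP.2.summable

lemma IsPMF.prodP {P : α → ℝ} (hP : IsPMF P) (n : ℕ) : IsPMF (prodP P n) := by
  have nonneg : ∀ m y, 0 ≤ _root_.prodP P m y := fun m y =>
    Finset.prod_nonneg fun j _ => hP.1 (y j)
  refine ⟨nonneg n, ?_⟩
  induction n with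
  | zero =>
    simpa [_root_.prodP] using hasSum_fintype (_root_.prodP P 0)
  | succ m ih =>
    have hcons : HasSum (fun p : α × (Fin m → α) => P p.1 * _root_.prodP P m p.2) 1 := by
      simpa using hP.2.mul ih (hP.summable.mul_of_nonneg ih.summable hP.1 (nonneg m))
    have hsplit : _root_.prodP P (m + 1) =
        (fun p : α × (Fin m → α) => P p.1 * _root_.prodP P m p.2) ∘
          (Fin.consEquiv fun _ => α).symm := by
      funext y
      simp [_root_.prodP, Fin.prod_univ_succ, Fin.consEquiv, Fin.tail]
    rw [hsplit]
    exact (Fin.consEquiv fun _ => α).symm.hasSum_iff.mpr hcons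

lemma IsPMF.mix2 {P1 P2 : α → ℝ} (hP1 : IsPMF P1) (hP2 : IsPMF P2) {w1 w2 : ℝ}
    (hw1 : 0 ≤ w1) (hw2 : 0 ≤ w2) (hw : w1 + w2 = 1) (n : ℕ) : IsPMF (mix2 P1 P2 w1 w2 n) := by
  refine ⟨fun y => ?_, ?_⟩
  · exact add_nonneg (mul_nonneg hw1 ((hP1.prodP n).1 y)) (mul_nonneg hw2 ((hP2.prodP n).1 y))
  · have := ((hP1.prodP n).2.mul_left w1).add ((hP2.prodP n).2.mul_left w2)
    rwa [mul_one, mul_one, hw] at this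

lemma mix2_pos_of_prodP_pos {P1 P2 Pi : α → ℝ} (hP1 : ∀ a, 0 ≤ P1 a) (hP2 : ∀ a, 0 ≤ P2 a)
    {w1 w2 : ℝ} (hw1 : 0 < w1) (hw2 : 0 < w2) (hPi : Pi = P1 ∨ Pi = P2) {n : ℕ}
    {y : Fin n → α} (hy : 0 < prodP Pi n y) : 0 < mix2 P1 P2 w1 w2 n y := by
  have h1 : 0 ≤ w1 * prodP P1 n y := mul_nonneg hw1.le (Finset.prod_nonneg fun j _ => hP1 (y j))
  have h2 : 0 ≤ w2 * prodP P2 n y := mul_nonneg hw2.le (Finset.prod_nonneg fun j _ => hP2 (y j))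
  rcases hPi with rfl | rfl
  · exact add_pos_of_pos_of_nonneg (mul_pos hw1 hy) h2
  · exact add_pos_of_nonneg_of_pos h1 (mul_pos hw2 hy)

lemma prb_le_prb_add_of_le_mul {P Q : α → ℝ} (hP : IsPMF P) (hQ : IsPMF Q) {A B : Set α}
    {c : ℝ} (hc : 0 ≤ c) (h : ∀ y ∈ A \ B, P y ≤ c * Q y) : prb P A ≤ prb P B + c := by
  have pointwise : ∀ y, A.indicator P y ≤ B.indicator P y + c * Q y := by
    intro y
    have hcQ : 0 ≤ c * Q y := mul_nonneg hc (hQ.1 y)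
    by_cases hB : y ∈ B
    · rw [Set.indicator_of_mem hB]
      exact (Set.indicator_le_self' (fun x _ => hP.1 x) y).trans (le_add_of_nonneg_right hcQ)
    · rw [Set.indicator_of_notMem hB, zero_add]
      by_cases hA : y ∈ A
      · rw [Set.indicator_of_mem hA]
        exact h y ⟨hA, hB⟩
      · rw [Set.indicator_of_notMem hA]
        exact hcQ
  calc prb P A ≤ ∑' y, (B.indicator P y + c * Q y) :=
        (hP.summable.indicator A).tsum_le_tsum pointwise
          ((hP.summable.indicator B).add (hQ.summable.mul_left c))
    _ = prb P B + c := by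
        rw [(hP.summable.indicator B).tsum_add (hQ.summable.mul_left c), tsum_mul_left,
          hQ.2.tsum_eq, mul_one, prb]

lemma le_exp_mul_of_log_inv_threshold {t p q z γ : ℝ} (ht : 0 < t) (hp : 0 < p) (hq : 0 < q)
    (hpz : z + γ ≤ 1 / t * Real.log (1 / p)) (hqz : ¬ z ≤ 1 / t * Real.log (1 / q)) :
    p ≤ Real.exp (-(t * γ)) * q := by
  rw [one_div_mul_eq_div, le_div_iff₀ ht, one_div, Real.log_inv] at hpz
  rw [not_le, one_div_mul_eq_div, div_lt_iff₀ ht, one_div, Real.log_inv] at hqz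
  calc p = Real.exp (Real.log p) := (Real.exp_log hp).symm
    _ ≤ Real.exp (-(t * γ) + Real.log q) := Real.exp_le_exp.mpr (by linarith)
    _ = Real.exp (-(t * γ)) * q := by rw [Real.exp_add, Real.exp_log hq]

end

theorem mixed_source_lemma_first_general
    {𝒴 : Type*}
    (P1 P2 : 𝒴 → ℝ) (hP1 : IsPMF P1) (hP2 : IsPMF P2)
    (w1 w2 : ℝ) (hw1 : 0 < w1) (hw2 : 0 < w2) (hw : w1 + w2 = 1)
    (z γ : ℕ → ℝ)
    (Pi : 𝒴 → ℝ) (hPi : Pi = P1 ∨ Pi = P2)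
    (n : ℕ) (hn : 1 ≤ n) :
    prb (prodP Pi n)
        {y | z n ≤ (1 / Real.sqrt n) * Real.log (1 / mix2 P1 P2 w1 w2 n y)}
      ≥ prb (prodP Pi n)
          {y | z n + γ n ≤ (1 / Real.sqrt n) * Real.log (1 / prodP Pi n y)}
        - Real.exp (-(Real.sqrt n * γ n)) := by
  have hPn : IsPMF (prodP Pi n) := by rcases hPi with rfl | rfl; exacts [hP1.prodP n, hP2.prodP n]
  have hQ : IsPMF (mix2 P1 P2 w1 w2 n) := hP1.mix2 hP2 hw1.le hw2.le hw n
  have hsqrt : 0 < Real.sqrt n := Real.sqrt_pos.mpr (by exact_mod_cast hn)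
  refine sub_le_iff_le_add.mpr (prb_le_prb_add_of_le_mul hPn hQ (Real.exp_pos _).le ?_)
  rintro y ⟨hA, hB⟩
  rcases (hPn.1 y).eq_or_lt with h0 | hpos
  · rw [← h0]
    exact mul_nonneg (Real.exp_pos _).le (hQ.1 y)
  · exact le_exp_mul_of_log_inv_threshold hsqrt hpos
      (mix2_pos_of_prodP_pos hP1.1 hP2.1 hw1 hw2 hPi hpos) hA hB

/-- Key lemma for mixed sources (Han), first inequality: for a mixed source
`Yⁿ = w(1) Y₁ⁿ + w(2) Y₂ⁿ` of two i.i.d. sources, any real sequence `z_n` and any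
sequence `γ_n` with `γ₁ > γ₂ > ⋯ > 0`, `γ_n → 0`, `√n γ_n → ∞`, one has for
`i = 1,2` and every `n ≥ 1`:
`Pr{ (1/√n) log(1/P_{Yⁿ}(Yᵢⁿ)) ≥ z_n } ≥ Pr{ (1/√n) log(1/P_{Yᵢⁿ}(Yᵢⁿ)) ≥ z_n + γ_n } − e^{−√n γ_n}`. -/
theorem mixed_source_lemma_first
    {𝒴 : Type*} [Countable 𝒴]
    (P1 P2 : 𝒴 → ℝ) (hP1 : IsPMF P1) (hP2 : IsPMF P2)
    (w1 w2 : ℝ) (hw1 : 0 < w1) (hw2 : 0 < w2) (hw : w1 + w2 = 1)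
    (z γ : ℕ → ℝ) (hγanti : StrictAnti γ) (hγpos : ∀ n, 0 < γ n)
    (hγ0 : Filter.Tendsto γ Filter.atTop (nhds 0))
    (hγtop : Filter.Tendsto (fun n : ℕ => Real.sqrt n * γ n) Filter.atTop Filter.atTop)
    (Pi : 𝒴 → ℝ) (hPi : Pi = P1 ∨ Pi = P2)
    (n : ℕ) (hn : 1 ≤ n) :
    prb (prodP Pi n)
        {y | z n ≤ (1 / Real.sqrt n) * Real.log (1 / mix2 P1 P2 w1 w2 n y)}
      ≥ prb (prodP Pi n)
          {y | z n + γ n ≤ (1 / Real.sqrt n) * Real.log (1 / prodP Pi n y)}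
        - Real.exp (-(Real.sqrt n * γ n)) :=
  mixed_source_lemma_first_general P1 P2 hP1 hP2 w1 w2 hw1 hw2 hw z γ Pi hPi n hn
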